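/- arXiv:2011.08466 — 2 statements merged into one kernel-verified Lean document; each statement's English description precedes it below -/
import Mathlib

section
/- Let V₁, V₂ be finite-dimensional vector spaces and v ∈ V₁ ⊗ V₂ with v ≠ 0. If v ∈ U ⊗ W for subspaces U ≤ V₁ and W ≤ V₂ with dim U = dim W = rank(v), then U = U₁^min(v) and W = U₂^min(v). -/
/-!
`U` contains the minimal subspace `U₁^min(v)` and has the same dimension, so they coincide.
Likewise `W ⊇ U₂^min(v)`; for equality it suffices that `dim U₂^min(v) ≥ rank v`.
Since tensoring over a field is exact, `(V₁ ⊗ A) ∩ (V₁ ⊗ B) = V₁ ⊗ (A ∩ B)`, so by the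
descending chain condition `v ∈ V₁ ⊗ U₂^min(v)`. Expanding `v` along a basis `(wᵢ)` of
`U₂^min(v)` as `∑ xᵢ ⊗ wᵢ` puts it in `span (xᵢ) ⊗ V₂`, whence
`rank v = dim U₁^min(v) ≤ dim U₂^min(v)`.
-/

open TensorProduct LinearMap Module

theorem InfClosed.sInf_mem_of_wellFoundedLT {α : Type*} [CompleteLattice α] [WellFoundedLT α]
    {s : Set α} (hs : InfClosed s) (hne : s.Nonempty) : sInf s ∈ s := by
  obtain ⟨m, hm⟩ := exists_minimal_of_wellFoundedLT (· ∈ s) hne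
  have hle : ∀ a ∈ s, m ≤ a := fun a ha =>
    hm.eq_of_le (hs hm.prop ha) inf_le_left ▸ inf_le_right
  rw [le_antisymm (sInf_le hm.prop) (le_sInf hle)]
  exact hm.prop

theorem LinearMap.range_map_le_range_rTensor {R M N P Q : Type*} [CommSemiring R]
    [AddCommMonoid M] [AddCommMonoid N] [AddCommMonoid P] [AddCommMonoid Q]
    [Module R M] [Module R N] [Module R P] [Module R Q] (f : M →ₗ[R] P) (g : N →ₗ[R] Q) :
    range (map f g) ≤ range (f.rTensor Q) := by
  rw [← rTensor_comp_lTensor]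
  exact range_comp_le_range _ _

theorem LinearMap.range_map_le_range_lTensor {R M N P Q : Type*} [CommSemiring R]
    [AddCommMonoid M] [AddCommMonoid N] [AddCommMonoid P] [AddCommMonoid Q]
    [Module R M] [Module R N] [Module R P] [Module R Q] (f : M →ₗ[R] P) (g : N →ₗ[R] Q) :
    range (map f g) ≤ range (g.lTensor P) := by
  rw [← lTensor_comp_rTensor]
  exact range_comp_le_range _ _

section Flat

variable {R M N : Type*} [CommRing R] [AddCommGroup M] [Module R M] [Module.Flat R M]
  [AddCommGroup N] [Module R N]

theorem Module.Flat.range_lTensor_inf_le (A B : Submodule R N) :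
    range (A.subtype.lTensor M) ⊓ range (B.subtype.lTensor M) ≤
      range ((A ⊓ B).subtype.lTensor M) := by
  rintro _ ⟨⟨t, rfl⟩, hB⟩
  have hexact : Function.Exact (Submodule.inclusion (inf_le_left : A ⊓ B ≤ A))
      (B.mkQ ∘ₗ A.subtype) := by
    rintro ⟨x, hxA⟩
    simp only [coe_comp, Submodule.coe_subtype, Function.comp_apply, Submodule.mkQ_apply,
      Submodule.Quotient.mk_eq_zero, Set.mem_range, Subtype.exists, Submodule.mem_inf]
    exact ⟨fun hxB => ⟨x, ⟨hxA, hxB⟩, rfl⟩, by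
      rintro ⟨a, ⟨_, haB⟩, h⟩
      obtain rfl : a = x := congrArg Subtype.val h
      exact haB⟩
  have ht : (B.mkQ ∘ₗ A.subtype).lTensor M t = 0 := by
    rw [lTensor_comp, comp_apply]
    exact (Flat.lTensor_exact M (exact_subtype_mkQ B) _).mpr hB
  obtain ⟨s, rfl⟩ := (Flat.lTensor_exact M hexact t).mp ht
  exact ⟨s, by rw [← comp_apply, ← lTensor_comp, Submodule.subtype_comp_inclusion]⟩

theorem Module.Flat.mem_range_lTensor_sInf [WellFoundedLT (Submodule R N)] (v : M ⊗[R] N) :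
    v ∈ range
      ((sInf {A : Submodule R N | v ∈ range (A.subtype.lTensor M)}).subtype.lTensor M) := by
  refine InfClosed.sInf_mem_of_wellFoundedLT
    (s := {A : Submodule R N | v ∈ range (A.subtype.lTensor M)})
    (fun A hA B hB => range_lTensor_inf_le A B ⟨hA, hB⟩) ⟨⊤, ?_⟩
  exact lTensor_surjective M (fun x => ⟨⟨x, trivial⟩, rfl⟩) v

end Flat

theorem TensorProduct.exists_finrank_le_of_mem_range_lTensor {k V₁ V₂ : Type*} [Field k]
    [AddCommGroup V₁] [Module k V₁] [AddCommGroup V₂] [Module k V₂]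
    {W : Submodule k V₂} [FiniteDimensional k W] {v : V₁ ⊗[k] V₂}
    (hv : v ∈ range (W.subtype.lTensor V₁)) :
    ∃ U : Submodule k V₁, finrank k U ≤ finrank k W ∧ v ∈ range (U.subtype.rTensor V₂) := by
  obtain ⟨t, rfl⟩ := hv
  obtain ⟨x, rfl⟩ := eq_repr_basis_right (finBasis k W) t
  refine ⟨Submodule.span k (Set.range x),
    (finrank_range_le_card x).trans_eq (Fintype.card_fin _), ?_⟩
  rw [Finsupp.sum, map_sum]
  refine Submodule.sum_mem _ fun i _ =>
    ⟨⟨x i, Submodule.subset_span ⟨i, rfl⟩⟩ ⊗ₜ (finBasis k W i : V₂), ?_⟩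
  simp

theorem stmt10_general (k V₁ V₂ : Type*) [Field k]
    [AddCommGroup V₁] [Module k V₁] [AddCommGroup V₂] [Module k V₂]
    [FiniteDimensional k V₁] [FiniteDimensional k V₂]
    (v : V₁ ⊗[k] V₂) (U : Submodule k V₁) (W : Submodule k V₂)
    (hmem : v ∈ LinearMap.range (TensorProduct.map U.subtype W.subtype))
    (hU : Module.finrank k U = Module.finrank k
      ↥(sInf {U' : Submodule k V₁ |
        v ∈ LinearMap.range (TensorProduct.map U'.subtype (LinearMap.id : V₂ →ₗ[k] V₂))}))
    (hW : Module.finrank k W = Module.finrank k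
      ↥(sInf {U' : Submodule k V₁ |
        v ∈ LinearMap.range (TensorProduct.map U'.subtype (LinearMap.id : V₂ →ₗ[k] V₂))})) :
    U = sInf {U' : Submodule k V₁ |
        v ∈ LinearMap.range (TensorProduct.map U'.subtype (LinearMap.id : V₂ →ₗ[k] V₂))} ∧
    W = sInf {W' : Submodule k V₂ |
        v ∈ LinearMap.range (TensorProduct.map (LinearMap.id : V₁ →ₗ[k] V₁) W'.subtype)} := by
  set U₁ := sInf {U' : Submodule k V₁ | v ∈ range (U'.subtype.rTensor V₂)}
  set W₂ := sInf {W' : Submodule k V₂ | v ∈ range (W'.subtype.lTensor V₁)}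
  have hUU₁ : U₁ ≤ U := sInf_le (range_map_le_range_rTensor _ _ hmem)
  have hWW₂ : W₂ ≤ W := sInf_le (range_map_le_range_lTensor _ _ hmem)
  obtain ⟨U', hU'W₂, hvU'⟩ :=
    exists_finrank_le_of_mem_range_lTensor (Module.Flat.mem_range_lTensor_sInf v)
  refine ⟨(Submodule.eq_of_le_of_finrank_le hUU₁ hU.le).symm,
    (Submodule.eq_of_le_of_finrank_le hWW₂ ?_).symm⟩
  calc finrank k W = finrank k U₁ := hW
    _ ≤ finrank k U' := Submodule.finrank_mono (sInf_le hvU')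
    _ ≤ finrank k W₂ := hU'W₂

/-- For `0 ≠ v ∈ V₁ ⊗ V₂`: if `v ∈ U ⊗ W` for subspaces `U ≤ V₁`, `W ≤ V₂` with
`dim U = dim W = rank v` (the rank of `v` being the common dimension of its minimal
subspaces), then `U = U₁^min(v)` and `W = U₂^min(v)`. -/
theorem stmt10 (k V₁ V₂ : Type*) [Field k]
    [AddCommGroup V₁] [Module k V₁] [AddCommGroup V₂] [Module k V₂]
    [FiniteDimensional k V₁] [FiniteDimensional k V₂]
    (v : V₁ ⊗[k] V₂) (hv : v ≠ 0) (U : Submodule k V₁) (W : Submodule k V₂)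
    (hmem : v ∈ LinearMap.range (TensorProduct.map U.subtype W.subtype))
    (hU : Module.finrank k U = Module.finrank k
      ↥(sInf {U' : Submodule k V₁ |
        v ∈ LinearMap.range (TensorProduct.map U'.subtype (LinearMap.id : V₂ →ₗ[k] V₂))}))
    (hW : Module.finrank k W = Module.finrank k
      ↥(sInf {U' : Submodule k V₁ |
        v ∈ LinearMap.range (TensorProduct.map U'.subtype (LinearMap.id : V₂ →ₗ[k] V₂))})) :
    U = sInf {U' : Submodule k V₁ |
        v ∈ LinearMap.range (TensorProduct.map U'.subtype (LinearMap.id : V₂ →ₗ[k] V₂))} ∧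
    W = sInf {W' : Submodule k V₂ |
        v ∈ LinearMap.range (TensorProduct.map (LinearMap.id : V₁ →ₗ[k] V₁) W'.subtype)} :=
  stmt10_general k V₁ V₂ v U W hmem hU hW
end

section
/- Let V₁, …, V_d be finite-dimensional vector spaces and v ∈ V₁ ⊗ ⋯ ⊗ V_d. If P_k, 1 ≤ k ≤ L, are the level partitions of a dimension partition tree T_D, then the chain of inclusions v ∈ ⊗_{α∈P_1} U_α^min(v) ⊆ ⊗_{α∈P_2} U_α^min(v) ⊆ ⋯ ⊆ ⊗_{α∈P_L} U_α^min(v) holds, where the inclusions are via the canonical embeddings induced by U_α^min(v) ⊆ ⊗_{β∈S(α)} U_β^min(v). -/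
open TensorProduct LinearMap

section Aux

variable {k : Type*} [Field k]

/-- Transport membership in a range along a commuting square of equivalences. -/
lemma aux_transport {X X' Y Y' : Type*} [AddCommGroup X] [Module k X]
    [AddCommGroup X'] [Module k X'] [AddCommGroup Y] [Module k Y]
    [AddCommGroup Y'] [Module k Y'] (eD : X ≃ₗ[k] X') (e : Y ≃ₗ[k] Y')
    (f : X →ₗ[k] Y) (f' : X' →ₗ[k] Y')
    (h : f' ∘ₗ (eD : X →ₗ[k] X') = (e : Y →ₗ[k] Y') ∘ₗ f) (w : Y) :
    w ∈ range f ↔ e w ∈ range f' := by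
  constructor
  · rintro ⟨x, rfl⟩
    exact ⟨eD x, by simpa using LinearMap.congr_fun h x⟩
  · rintro ⟨x', hx'⟩
    refine ⟨eD.symm x', e.injective ?_⟩
    have := LinearMap.congr_fun h (eD.symm x')
    simp only [LinearMap.comp_apply, LinearEquiv.coe_coe, LinearEquiv.apply_symm_apply] at this
    rw [← this, hx']

/-- Membership in the range of `A.subtype ⊗ id` is detected by the quotient map. -/
lemma aux_mem_iff {V W : Type*} [AddCommGroup V] [Module k V] [AddCommGroup W] [Module k W]
    (A : Submodule k V) (w : V ⊗[k] W) :
    w ∈ range (TensorProduct.map A.subtype (LinearMap.id : W →ₗ[k] W)) ↔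
      rTensor W A.mkQ w = 0 := by
  have h : TensorProduct.map A.subtype (LinearMap.id : W →ₗ[k] W) = rTensor W A.subtype := rfl
  rw [h, ← LinearMap.mem_ker, rTensor_mkQ]

/-- Intersection lemma: same-side. -/
lemma aux_inf {V W : Type*} [AddCommGroup V] [Module k V] [AddCommGroup W] [Module k W]
    (A B : Submodule k V) (w : V ⊗[k] W)
    (hA : w ∈ range (TensorProduct.map A.subtype (LinearMap.id : W →ₗ[k] W)))
    (hB : w ∈ range (TensorProduct.map B.subtype (LinearMap.id : W →ₗ[k] W))) :
    w ∈ range (TensorProduct.map (A ⊓ B).subtype (LinearMap.id : W →ₗ[k] W)) := by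
  rw [aux_mem_iff] at hA hB ⊢
  have hker : ker (A.mkQ.prod B.mkQ) = A ⊓ B := by
    ext x
    simp [LinearMap.mem_ker, Prod.ext_iff, Submodule.Quotient.mk_eq_zero]
  set f : (V ⧸ (A ⊓ B)) →ₗ[k] (V ⧸ A) × (V ⧸ B) :=
    Submodule.liftQ _ (A.mkQ.prod B.mkQ) (le_of_eq hker.symm) with hf
  have hfinj : Function.Injective f := by
    rw [← LinearMap.ker_eq_bot]
    exact Submodule.ker_liftQ_eq_bot _ _ _ (le_of_eq hker)
  have hinj : Function.Injective (rTensor W f) :=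
    Module.Flat.rTensor_preserves_injective_linearMap f hfinj
  apply hinj
  rw [map_zero, ← LinearMap.comp_apply, ← rTensor_comp]
  have hcomp : f ∘ₗ (A ⊓ B).mkQ = A.mkQ.prod B.mkQ := by
    refine LinearMap.ext fun x => ?_
    rfl
  rw [hcomp]
  -- now use prodLeft
  apply (TensorProduct.prodLeft k k (V ⧸ A) (V ⧸ B) W).injective
  have h1 : ((TensorProduct.prodLeft k k (V ⧸ A) (V ⧸ B) W : ((V ⧸ A) × (V ⧸ B)) ⊗[k] W ≃ₗ[k] _)
        : ((V ⧸ A) × (V ⧸ B)) ⊗[k] W →ₗ[k] _) ∘ₗ rTensor W (A.mkQ.prod B.mkQ) =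
      (rTensor W A.mkQ).prod (rTensor W B.mkQ) := by
    apply TensorProduct.ext'
    intro x y
    simp
  have := LinearMap.congr_fun h1 w
  simp only [LinearMap.comp_apply, LinearEquiv.coe_coe] at this
  rw [this, map_zero]
  simp [hA, hB, Prod.ext_iff]

/-- Cross lemma via a retraction. -/
lemma aux_cross {M N M' N' : Type*} [AddCommGroup M] [Module k M] [AddCommGroup N] [Module k N]
    [AddCommGroup M'] [Module k M'] [AddCommGroup N'] [Module k N']
    (f : M' →ₗ[k] M) (g : N' →ₗ[k] N) (q : N →ₗ[k] N') (hq : q ∘ₗ g = LinearMap.id)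
    (w : M ⊗[k] N)
    (h1 : w ∈ range (TensorProduct.map f (LinearMap.id : N →ₗ[k] N)))
    (h2 : w ∈ range (TensorProduct.map (LinearMap.id : M →ₗ[k] M) g)) :
    w ∈ range (TensorProduct.map f g) := by
  obtain ⟨x, hx⟩ := h1
  obtain ⟨y, hy⟩ := h2
  refine ⟨TensorProduct.map LinearMap.id q x, ?_⟩
  have e1 : TensorProduct.map f g ∘ₗ TensorProduct.map LinearMap.id q
      = TensorProduct.map (LinearMap.id : M →ₗ[k] M) (g ∘ₗ q)
        ∘ₗ TensorProduct.map f (LinearMap.id : N →ₗ[k] N) := by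
    rw [← TensorProduct.map_comp, ← TensorProduct.map_comp]
    simp
  have := LinearMap.congr_fun e1 x
  simp only [LinearMap.comp_apply] at this
  rw [this, hx, ← hy, ← LinearMap.comp_apply, ← TensorProduct.map_comp]
  have h3 : (g ∘ₗ q) ∘ₗ g = g := by rw [LinearMap.comp_assoc, hq, LinearMap.comp_id]
  have h4 : (LinearMap.id : M →ₗ[k] M) ∘ₗ LinearMap.id = LinearMap.id := rfl
  rw [h3, h4]

/-- The sInf of a nonempty inf-closed set of submodules of a f.d. space belongs to the set. -/
lemma aux_sInf {V : Type*} [AddCommGroup V] [Module k V] [FiniteDimensional k V]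
    (S : Set (Submodule k V)) (hne : S.Nonempty)
    (hinf : ∀ A ∈ S, ∀ B ∈ S, A ⊓ B ∈ S) : sInf S ∈ S := by
  set T : Set ℕ := (fun U : Submodule k V => Module.finrank k U) '' S with hT
  have hTne : T.Nonempty := hne.image _
  have hmem := Nat.sInf_mem hTne
  obtain ⟨m, hmS, hmrank⟩ := hmem
  have hmle : ∀ U ∈ S, m ≤ U := by
    intro U hU
    have h1 : m ⊓ U ∈ S := hinf m hmS U hU
    have h2 : sInf T ≤ Module.finrank k (m ⊓ U : Submodule k V) :=
      Nat.sInf_le ⟨m ⊓ U, h1, rfl⟩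
    have h3 : m ⊓ U = m :=
      Submodule.eq_of_le_of_finrank_le inf_le_left (le_trans (le_of_eq hmrank) h2)
    rw [← h3]; exact inf_le_right
  have : sInf S = m := le_antisymm (sInf_le hmS) (le_sInf hmle)
  rw [this]; exact hmS

/-- Range monotonicity for tensor maps. -/
lemma aux_range_mono {M N P Q M' N' : Type*}
    [AddCommGroup M] [Module k M] [AddCommGroup N] [Module k N]
    [AddCommGroup P] [Module k P] [AddCommGroup Q] [Module k Q]
    [AddCommGroup M'] [Module k M'] [AddCommGroup N'] [Module k N']
    (f : M →ₗ[k] P) (f' : M' →ₗ[k] P) (g : N →ₗ[k] Q) (g' : N' →ₗ[k] Q)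
    (hf : range f ≤ range f') (hg : range g ≤ range g') :
    range (TensorProduct.map f g) ≤ range (TensorProduct.map f' g') := by
  rw [TensorProduct.range_map_eq_span_tmul, TensorProduct.range_map_eq_span_tmul]
  apply Submodule.span_mono
  rintro t ⟨m, n, rfl⟩
  obtain ⟨m', hm'⟩ := hf ⟨m, rfl⟩
  obtain ⟨n', hn'⟩ := hg ⟨n, rfl⟩
  exact ⟨m', n', by rw [hm', hn']⟩


/-- Transport range membership along the associator. -/
lemma aux_transport_assoc {M N P Q S T : Type*}
    [AddCommGroup M] [Module k M] [AddCommGroup N] [Module k N] [AddCommGroup P] [Module k P]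
    [AddCommGroup Q] [Module k Q] [AddCommGroup S] [Module k S] [AddCommGroup T] [Module k T]
    (f : M →ₗ[k] Q) (g : N →ₗ[k] S) (h : P →ₗ[k] T) (w : (Q ⊗[k] S) ⊗[k] T) :
    w ∈ range (TensorProduct.map (TensorProduct.map f g) h) ↔
      (TensorProduct.assoc k Q S T) w ∈
        range (TensorProduct.map f (TensorProduct.map g h)) := by
  constructor
  · rintro ⟨x, rfl⟩
    exact ⟨TensorProduct.assoc k M N P x, TensorProduct.map_map_assoc f g h x⟩
  · rintro ⟨x', hx'⟩
    refine ⟨(TensorProduct.assoc k M N P).symm x', ?_⟩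
    rw [TensorProduct.map_map_assoc_symm f g h x', hx', LinearEquiv.symm_apply_apply]

/-- Transport range membership along the commutor. -/
lemma aux_transport_comm {M N P Q : Type*}
    [AddCommGroup M] [Module k M] [AddCommGroup N] [Module k N] [AddCommGroup P] [Module k P]
    [AddCommGroup Q] [Module k Q]
    (f : M →ₗ[k] P) (g : N →ₗ[k] Q) (w : Q ⊗[k] P) :
    w ∈ range (TensorProduct.map g f) ↔
      (TensorProduct.comm k Q P) w ∈ range (TensorProduct.map f g) := by
  constructor
  · rintro ⟨x, rfl⟩
    exact ⟨TensorProduct.comm k N M x, TensorProduct.map_comm f g x⟩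
  · rintro ⟨y, hy⟩
    refine ⟨TensorProduct.comm k M N y, ?_⟩
    have := TensorProduct.map_comm g f y
    have hww : ∀ u : Q ⊗[k] P,
        (TensorProduct.comm k P Q) ((TensorProduct.comm k Q P) u) = u := by
      intro u
      induction u using TensorProduct.induction_on with
      | zero => simp
      | tmul a b => simp
      | add a b ha hb => simp only [map_add, ha, hb]
    rw [this, hy, hww]

end Aux

/-- The chain of inclusions between tensor products of minimal subspaces along the level
partitions of a dimension partition tree, instantiated for `D = {1,2,3}` and the tree
with level partitions `P₁ = {{1,2},{3}}` and `P₂ = {{1},{2},{3}}`: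
`v ∈ U_{12}^min(v) ⊗ U₃^min(v) ⊆ (U₁^min(v) ⊗ U₂^min(v)) ⊗ U₃^min(v)`,
where the second inclusion is induced by `U_{12}^min(v) ⊆ U₁^min(v) ⊗ U₂^min(v)`. -/
theorem stmt17 (k V₁ V₂ V₃ : Type*) [Field k]
    [AddCommGroup V₁] [Module k V₁] [AddCommGroup V₂] [Module k V₂]
    [AddCommGroup V₃] [Module k V₃]
    [FiniteDimensional k V₁] [FiniteDimensional k V₂] [FiniteDimensional k V₃]
    (v : (V₁ ⊗[k] V₂) ⊗[k] V₃) :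
    v ∈ LinearMap.range (TensorProduct.map
      (sInf {U : Submodule k (V₁ ⊗[k] V₂) |
        v ∈ LinearMap.range (TensorProduct.map U.subtype (LinearMap.id : V₃ →ₗ[k] V₃))}).subtype
      (sInf {U : Submodule k V₃ | v ∈ LinearMap.range (TensorProduct.map
        (LinearMap.id : (V₁ ⊗[k] V₂) →ₗ[k] (V₁ ⊗[k] V₂)) U.subtype)}).subtype) ∧
    LinearMap.range (TensorProduct.map
      (sInf {U : Submodule k (V₁ ⊗[k] V₂) |
        v ∈ LinearMap.range (TensorProduct.map U.subtype (LinearMap.id : V₃ →ₗ[k] V₃))}).subtype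
      (sInf {U : Submodule k V₃ | v ∈ LinearMap.range (TensorProduct.map
        (LinearMap.id : (V₁ ⊗[k] V₂) →ₗ[k] (V₁ ⊗[k] V₂)) U.subtype)}).subtype)
    ≤ LinearMap.range (TensorProduct.map
      (TensorProduct.map
        (sInf {U : Submodule k V₁ | v ∈ LinearMap.range (TensorProduct.map
          (TensorProduct.map U.subtype (LinearMap.id : V₂ →ₗ[k] V₂))
          (LinearMap.id : V₃ →ₗ[k] V₃))}).subtype
        (sInf {U : Submodule k V₂ | v ∈ LinearMap.range (TensorProduct.map
          (TensorProduct.map (LinearMap.id : V₁ →ₗ[k] V₁) U.subtype)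
          (LinearMap.id : V₃ →ₗ[k] V₃))}).subtype)
      (sInf {U : Submodule k V₃ | v ∈ LinearMap.range (TensorProduct.map
        (LinearMap.id : (V₁ ⊗[k] V₂) →ₗ[k] (V₁ ⊗[k] V₂)) U.subtype)}).subtype) := by
  classical
  set S12 : Set (Submodule k (V₁ ⊗[k] V₂)) := {U : Submodule k (V₁ ⊗[k] V₂) |
    v ∈ LinearMap.range (TensorProduct.map U.subtype (LinearMap.id : V₃ →ₗ[k] V₃))} with hS12
  set S3 : Set (Submodule k V₃) := {U : Submodule k V₃ | v ∈ LinearMap.range (TensorProduct.map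
    (LinearMap.id : (V₁ ⊗[k] V₂) →ₗ[k] (V₁ ⊗[k] V₂)) U.subtype)} with hS3
  set S1 : Set (Submodule k V₁) := {U : Submodule k V₁ | v ∈ LinearMap.range (TensorProduct.map
    (TensorProduct.map U.subtype (LinearMap.id : V₂ →ₗ[k] V₂))
    (LinearMap.id : V₃ →ₗ[k] V₃))} with hS1
  set S2 : Set (Submodule k V₂) := {U : Submodule k V₂ | v ∈ LinearMap.range (TensorProduct.map
    (TensorProduct.map (LinearMap.id : V₁ →ₗ[k] V₁) U.subtype)
    (LinearMap.id : V₃ →ₗ[k] V₃))} with hS2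
  have iff3 : ∀ B : Submodule k V₃,
      (v ∈ range (TensorProduct.map (LinearMap.id : (V₁ ⊗[k] V₂) →ₗ[k] (V₁ ⊗[k] V₂)) B.subtype))
      ↔ (TensorProduct.comm k (V₁ ⊗[k] V₂) V₃) v ∈
          range (TensorProduct.map B.subtype
            (LinearMap.id : (V₁ ⊗[k] V₂) →ₗ[k] (V₁ ⊗[k] V₂))) := fun B =>
    aux_transport_comm B.subtype (LinearMap.id : (V₁ ⊗[k] V₂) →ₗ[k] (V₁ ⊗[k] V₂)) v
  have iff1 : ∀ A : Submodule k V₁,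
      (v ∈ range (TensorProduct.map
        (TensorProduct.map A.subtype (LinearMap.id : V₂ →ₗ[k] V₂))
        (LinearMap.id : V₃ →ₗ[k] V₃)))
      ↔ (TensorProduct.assoc k V₁ V₂ V₃) v ∈
          range (TensorProduct.map A.subtype
            (LinearMap.id : V₂ ⊗[k] V₃ →ₗ[k] V₂ ⊗[k] V₃)) := by
    intro A
    have h := aux_transport_assoc A.subtype (LinearMap.id : V₂ →ₗ[k] V₂)
      (LinearMap.id : V₃ →ₗ[k] V₃) v
    rwa [TensorProduct.map_id] at h
  have iff2 : ∀ A : Submodule k V₂,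
      (v ∈ range (TensorProduct.map
        (TensorProduct.map (LinearMap.id : V₁ →ₗ[k] V₁) A.subtype)
        (LinearMap.id : V₃ →ₗ[k] V₃)))
      ↔ (TensorProduct.assoc k V₂ V₃ V₁) ((TensorProduct.comm k V₁ (V₂ ⊗[k] V₃))
            ((TensorProduct.assoc k V₁ V₂ V₃) v)) ∈
          range (TensorProduct.map A.subtype
            (LinearMap.id : V₃ ⊗[k] V₁ →ₗ[k] V₃ ⊗[k] V₁)) := by
    intro A
    have t1 := aux_transport_assoc (LinearMap.id : V₁ →ₗ[k] V₁) A.subtype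
      (LinearMap.id : V₃ →ₗ[k] V₃) v
    have t2 := aux_transport_comm
      (TensorProduct.map A.subtype (LinearMap.id : V₃ →ₗ[k] V₃))
      (LinearMap.id : V₁ →ₗ[k] V₁) ((TensorProduct.assoc k V₁ V₂ V₃) v)
    have t3 := aux_transport_assoc A.subtype (LinearMap.id : V₃ →ₗ[k] V₃)
      (LinearMap.id : V₁ →ₗ[k] V₁)
      ((TensorProduct.comm k V₁ (V₂ ⊗[k] V₃)) ((TensorProduct.assoc k V₁ V₂ V₃) v))
    rw [TensorProduct.map_id] at t3
    exact t1.trans (t2.trans t3)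
  have h12 : sInf S12 ∈ S12 := by
    apply aux_sInf
    · refine ⟨⊤, TensorProduct.map_surjective (fun x => ⟨⟨x, trivial⟩, rfl⟩)
        (fun x => ⟨x, rfl⟩) v⟩
    · intro A hA B hB
      exact aux_inf A B v hA hB
  have h3 : sInf S3 ∈ S3 := by
    apply aux_sInf
    · refine ⟨⊤, TensorProduct.map_surjective (fun x => ⟨x, rfl⟩)
        (fun x => ⟨⟨x, trivial⟩, rfl⟩) v⟩
    · intro A hA B hB
      exact (iff3 (A ⊓ B)).mpr (aux_inf A B _ ((iff3 A).mp hA) ((iff3 B).mp hB))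
  have h1 : sInf S1 ∈ S1 := by
    apply aux_sInf
    · refine ⟨⊤, TensorProduct.map_surjective
        (TensorProduct.map_surjective (fun x => ⟨⟨x, trivial⟩, rfl⟩) (fun x => ⟨x, rfl⟩))
        (fun x => ⟨x, rfl⟩) v⟩
    · intro A hA B hB
      exact (iff1 (A ⊓ B)).mpr (aux_inf A B _ ((iff1 A).mp hA) ((iff1 B).mp hB))
  have h2 : sInf S2 ∈ S2 := by
    apply aux_sInf
    · refine ⟨⊤, TensorProduct.map_surjective
        (TensorProduct.map_surjective (fun x => ⟨x, rfl⟩) (fun x => ⟨⟨x, trivial⟩, rfl⟩))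
        (fun x => ⟨x, rfl⟩) v⟩
    · intro A hA B hB
      exact (iff2 (A ⊓ B)).mpr (aux_inf A B _ ((iff2 A).mp hA) ((iff2 B).mp hB))
  constructor
  · obtain ⟨q, hq⟩ := (sInf S3).subtype.exists_leftInverse_of_injective (Submodule.ker_subtype _)
    exact aux_cross (sInf S12).subtype (sInf S3).subtype q hq v h12 h3
  · obtain ⟨q₂, hq₂⟩ := (sInf S2).subtype.exists_leftInverse_of_injective (Submodule.ker_subtype _)
    have ha : (TensorProduct.assoc k V₁ V₂ V₃) v ∈
        range (TensorProduct.map (sInf S1).subtype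
          (LinearMap.id : V₂ ⊗[k] V₃ →ₗ[k] V₂ ⊗[k] V₃)) := (iff1 (sInf S1)).mp h1
    have hb : (TensorProduct.assoc k V₁ V₂ V₃) v ∈
        range (TensorProduct.map (LinearMap.id : V₁ →ₗ[k] V₁)
          (TensorProduct.map (sInf S2).subtype (LinearMap.id : V₃ →ₗ[k] V₃))) :=
      (aux_transport_assoc (LinearMap.id : V₁ →ₗ[k] V₁) (sInf S2).subtype
        (LinearMap.id : V₃ →ₗ[k] V₃) v).mp h2
    have hqq : (TensorProduct.map q₂ (LinearMap.id : V₃ →ₗ[k] V₃)) ∘ₗ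
        (TensorProduct.map (sInf S2).subtype (LinearMap.id : V₃ →ₗ[k] V₃)) = LinearMap.id := by
      rw [← TensorProduct.map_comp, hq₂]
      exact TensorProduct.map_id
    have hcross : (TensorProduct.assoc k V₁ V₂ V₃) v ∈
        range (TensorProduct.map (sInf S1).subtype
          (TensorProduct.map (sInf S2).subtype (LinearMap.id : V₃ →ₗ[k] V₃))) :=
      aux_cross (sInf S1).subtype
        (TensorProduct.map (sInf S2).subtype (LinearMap.id : V₃ →ₗ[k] V₃))
        (TensorProduct.map q₂ (LinearMap.id : V₃ →ₗ[k] V₃)) hqq _ ha hb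
    have hback : v ∈ range (TensorProduct.map
        (TensorProduct.map (sInf S1).subtype (sInf S2).subtype)
        (LinearMap.id : V₃ →ₗ[k] V₃)) :=
      (aux_transport_assoc (sInf S1).subtype (sInf S2).subtype
        (LinearMap.id : V₃ →ₗ[k] V₃) v).mpr hcross
    have hRmem : range (TensorProduct.map (sInf S1).subtype (sInf S2).subtype) ∈ S12 := by
      refine aux_range_mono (TensorProduct.map (sInf S1).subtype (sInf S2).subtype)
        (range (TensorProduct.map (sInf S1).subtype (sInf S2).subtype)).subtype
        (LinearMap.id : V₃ →ₗ[k] V₃) (LinearMap.id : V₃ →ₗ[k] V₃) ?_ le_rfl hback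
      rw [Submodule.range_subtype]
    have hle : sInf S12 ≤ range (TensorProduct.map (sInf S1).subtype (sInf S2).subtype) :=
      sInf_le hRmem
    refine aux_range_mono (sInf S12).subtype
      (TensorProduct.map (sInf S1).subtype (sInf S2).subtype)
      (sInf S3).subtype (sInf S3).subtype ?_ le_rfl
    rw [Submodule.range_subtype]
    exact hle
end
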